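/- Let V be a finite set of nodes with source s ∈ V, let E be a finite set of edges (unordered pairs of distinct nodes of V), and let i ∈ V \ {s}. Let w and w' be nonnegative real edge costs that agree on every edge except possibly one edge e₀ ∈ E incident to i, where w'(e₀) ≥ w(e₀). Suppose N = V \ {s} is nonempty and connectable within E, and let v and v' be the connection games (v(∅)=0, v(S) = connection cost of S) computed with costs w and w' respectively. Then φ_i(N, v') ≥ φ_i(N, v): increasing the cost of one of node i's adjacent edges weakly increases node i's Shapley cost share (cost monotonicity of the average marginal cost mechanism). -/

import Mathlib

open Finset

/-- The edge set `F` connects every node of `S` to the source `src`: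
in the graph with edge set `F`, every node of `S` is reachable from `src`. -/
def Connects {α : Type*} (src : α) (F : Finset (Sym2 α)) (S : Finset α) : Prop :=
  ∀ i ∈ S, (SimpleGraph.fromEdgeSet (↑F : Set (Sym2 α))).Reachable src i

/-- `S` is connectable within the available edge set `E`: some `F ⊆ E`
connects every node of `S` to the source. -/
def Connectable {α : Type*} (src : α) (E : Finset (Sym2 α)) (S : Finset α) : Prop :=
  ∃ F ⊆ E, Connects src F S

/-- The minimum cost `C_E(S)` of connecting `S` to the source `src` using
edges from `E` with edge costs `w`. -/
noncomputable def connCost {α : Type*} (src : α) (w : Sym2 α → ℝ)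
    (E : Finset (Sym2 α)) (S : Finset α) : ℝ :=
  sInf {x : ℝ | ∃ F ⊆ E, Connects src F S ∧ x = ∑ e ∈ F, w e}
/-- The Shapley value of player `i` in the game `(N, v)`:
`φ_i(N,v) = Σ_{S ⊆ N\{i}} [|S|!·(|N|−|S|−1)!/|N|!]·(v(S∪{i}) − v(S))`. -/
noncomputable def shapley {α : Type*} [DecidableEq α]
    (N : Finset α) (v : Finset α → ℝ) (i : α) : ℝ :=
  ∑ S ∈ (N.erase i).powerset,
    ((S.card.factorial * (N.card - S.card - 1).factorial : ℝ) / (N.card.factorial : ℝ))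
      * (v (insert i S) - v S)

/-- The connection game induced by edge set `E` with costs `w`:
`v(∅) = 0` and `v(S) = C_E(S)` for nonempty `S`. -/
noncomputable def connGame {α : Type*} [DecidableEq α] (src : α) (w : Sym2 α → ℝ)
    (E : Finset (Sym2 α)) (S : Finset α) : ℝ :=
  if S = ∅ then 0 else connCost src w E S

/-!
Since `w ≤ w'`, it suffices to show that the marginal cost of `i` can only grow:
`C_w(S ∪ {i}) + C_{w'}(S) ≤ C_{w'}(S ∪ {i}) + C_w(S)`. Take `F` optimal for `S ∪ {i}` under `w'`
and `G` optimal for `S` under `w`, with `G` pruned to the edges whose endpoints are reachable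
from the source. If `e₀ ∉ G`, then `G` costs the same under both weights and `F` costs less
under `w`. If `e₀ ∈ G`, then `i` is reachable in `G`, so the two sets swap roles: `G` connects
`S ∪ {i}` and `F` connects `S`.
-/

section

variable {α : Type*} {src : α} {E F : Finset (Sym2 α)} {S T : Finset α} {w w' : Sym2 α → ℝ}

lemma Connects.mono (h : Connects src F T) (hST : S ⊆ T) : Connects src F S :=
  fun j hj => h j (hST hj)

lemma Connectable.mono (h : Connectable src E T) (hST : S ⊆ T) : Connectable src E S :=
  let ⟨F, hFE, hF⟩ := h
  ⟨F, hFE, hF.mono hST⟩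

lemma connCost_set_finite (src : α) (w : Sym2 α → ℝ) (E : Finset (Sym2 α)) (S : Finset α) :
    {x : ℝ | ∃ F ⊆ E, Connects src F S ∧ x = ∑ e ∈ F, w e}.Finite := by
  refine (E.powerset.image fun F => ∑ e ∈ F, w e).finite_toSet.subset ?_
  rintro x ⟨F, hFE, -, rfl⟩
  exact mem_image_of_mem _ (mem_powerset.mpr hFE)

lemma connCost_le_sum (hFE : F ⊆ E) (hF : Connects src F S) :
    connCost src w E S ≤ ∑ e ∈ F, w e :=
  csInf_le (connCost_set_finite src w E S).bddBelow ⟨F, hFE, hF, rfl⟩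

lemma Connectable.exists_connCost_eq_sum (w : Sym2 α → ℝ) (h : Connectable src E S) :
    ∃ F ⊆ E, Connects src F S ∧ connCost src w E S = ∑ e ∈ F, w e :=
  let ⟨F, hFE, hF⟩ := h
  Set.Nonempty.csInf_mem (s := {x : ℝ | ∃ F ⊆ E, Connects src F S ∧ x = ∑ e ∈ F, w e})
    ⟨_, F, hFE, hF, rfl⟩ (connCost_set_finite src w E S)

lemma connCost_empty (hw : ∀ e ∈ E, 0 ≤ w e) : connCost src w E ∅ = 0 := by
  have hconn : Connects src (∅ : Finset (Sym2 α)) ∅ := fun _ h => absurd h (notMem_empty _)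
  obtain ⟨F, hFE, -, hF⟩ := Connectable.exists_connCost_eq_sum w ⟨∅, empty_subset E, hconn⟩
  refine le_antisymm (by simpa using connCost_le_sum (w := w) (empty_subset E) hconn) ?_
  exact hF ▸ sum_nonneg fun e he => hw e (hFE he)

lemma connGame_eq_connCost [DecidableEq α] (hw : ∀ e ∈ E, 0 ≤ w e) (S : Finset α) :
    connGame src w E S = connCost src w E S := by
  unfold connGame
  split_ifs with hS
  · rw [hS, connCost_empty hw]
  · rfl

/-- Keeping only the edges reachable from the source does not disconnect anything. -/
lemma Connects.exists_subset_forall_mem_reachable (hF : Connects src F S) :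
    ∃ F₁ ⊆ F, Connects src F₁ S ∧
      ∀ e ∈ F₁, ∀ x ∈ e, (SimpleGraph.fromEdgeSet (↑F₁ : Set (Sym2 α))).Reachable src x := by
  classical
  set G := SimpleGraph.fromEdgeSet (↑F : Set (Sym2 α))
  set F₁ := F.filter fun e => ∀ x ∈ e, G.Reachable src x
  have hreach : ∀ y, G.Reachable src y →
      (SimpleGraph.fromEdgeSet (↑F₁ : Set (Sym2 α))).Reachable src y := by
    rintro y ⟨p⟩
    refine ⟨p.transfer _ fun e he => ?_⟩
    obtain ⟨heF, hdiag⟩ : e ∈ (↑F : Set (Sym2 α)) \ Sym2.diagSet := by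
      simpa [G, SimpleGraph.edgeSet_fromEdgeSet] using p.edges_subset_edgeSet he
    rw [SimpleGraph.edgeSet_fromEdgeSet]
    refine ⟨mem_filter.mpr ⟨heF, fun x hx => ?_⟩, hdiag⟩
    exact ⟨p.takeUntil x (SimpleGraph.Walk.mem_support_of_mem_edges he hx)⟩
  exact ⟨F₁, filter_subset _ _, fun j hj => hreach j (hF j hj),
    fun e he x hx => hreach x ((mem_filter.mp he).2 x hx)⟩

lemma Connectable.exists_connCost_eq_sum_forall_mem_reachable (hw : ∀ e ∈ E, 0 ≤ w e)
    (h : Connectable src E S) :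
    ∃ G ⊆ E, Connects src G S ∧ connCost src w E S = ∑ e ∈ G, w e ∧
      ∀ e ∈ G, ∀ x ∈ e, (SimpleGraph.fromEdgeSet (↑G : Set (Sym2 α))).Reachable src x := by
  obtain ⟨G, hGE, hG, hcost⟩ := h.exists_connCost_eq_sum w
  obtain ⟨G₁, hG₁G, hG₁, hreach⟩ := hG.exists_subset_forall_mem_reachable
  have hG₁E := hG₁G.trans hGE
  refine ⟨G₁, hG₁E, hG₁, le_antisymm (connCost_le_sum hG₁E hG₁) ?_, hreach⟩
  exact hcost ▸ sum_le_sum_of_subset_of_nonneg hG₁G fun e he _ => hw e (hGE he)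

theorem connCost_insert_add_le [DecidableEq α] {i : α} {e₀ : Sym2 α}
    (hw : ∀ e ∈ E, 0 ≤ w e) (hle : w ≤ w') (hagree : ∀ e, e ≠ e₀ → w' e = w e) (he₀i : i ∈ e₀)
    (hiS : Connectable src E (insert i S)) :
    connCost src w E (insert i S) + connCost src w' E S ≤
      connCost src w' E (insert i S) + connCost src w E S := by
  obtain ⟨F, hFE, hF, hFcost⟩ := hiS.exists_connCost_eq_sum w'
  obtain ⟨G, hGE, hG, hGcost, hGreach⟩ :=
    (hiS.mono (subset_insert i S)).exists_connCost_eq_sum_forall_mem_reachable hw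
  rw [hFcost, hGcost]
  by_cases he₀G : e₀ ∈ G
  · have hGi : Connects src G (insert i S) := by
      intro j hj
      rcases mem_insert.mp hj with rfl | hj
      exacts [hGreach e₀ he₀G j he₀i, hG j hj]
    have h₁ := connCost_le_sum (w := w) hGE hGi
    have h₂ := connCost_le_sum (w := w') hFE (hF.mono (subset_insert i S))
    linarith
  · have h₁ := (connCost_le_sum (w := w) hFE hF).trans (sum_le_sum fun e _ => hle e)
    have hGw : ∑ e ∈ G, w' e = ∑ e ∈ G, w e :=
      sum_congr rfl fun e he => hagree e (ne_of_mem_of_not_mem he he₀G)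
    have h₂ := (connCost_le_sum (w := w') hGE hG).trans hGw.le
    linarith

end

theorem amcm_cost_monotone_general (α : Type*) [DecidableEq α]
    (V : Finset α) (src : α)
    (E : Finset (Sym2 α))
    (i : α) (hiV : i ∈ V \ {src})
    (w w' : Sym2 α → ℝ) (hw : ∀ e ∈ E, 0 ≤ w e) (hw' : ∀ e ∈ E, 0 ≤ w' e)
    (e₀ : Sym2 α) (he₀i : i ∈ e₀)
    (hagree : ∀ e, e ≠ e₀ → w' e = w e) (hle : w e₀ ≤ w' e₀)
    (hconn : Connectable src E (V \ {src})) :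
    shapley (V \ {src}) (connGame src w E) i ≤
      shapley (V \ {src}) (connGame src w' E) i := by
  have hww' : w ≤ w' := fun e => by
    by_cases he : e = e₀
    · exact he ▸ hle
    · exact (hagree e he).ge
  refine sum_le_sum fun S hS => mul_le_mul_of_nonneg_left ?_ (by positivity)
  have hiS : insert i S ⊆ V \ {src} :=
    insert_subset hiV ((mem_powerset.mp hS).trans (erase_subset i _))
  have key := connCost_insert_add_le hw hww' hagree he₀i (hconn.mono hiS)
  simp only [connGame_eq_connCost hw, connGame_eq_connCost hw']
  linarith

/-- Cost monotonicity of the average marginal cost mechanism: if the cost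
functions `w` and `w'` agree on every edge except possibly one edge `e₀ ∈ E`
incident to node `i`, where `w' e₀ ≥ w e₀`, then node `i`'s Shapley cost share
in the connection game weakly increases. -/
theorem amcm_cost_monotone (α : Type*) [DecidableEq α]
    (V : Finset α) (src : α) (hsrc : src ∈ V)
    (E : Finset (Sym2 α)) (hE : ∀ e ∈ E, ¬ e.IsDiag ∧ ∀ x ∈ e, x ∈ V)
    (i : α) (hiV : i ∈ V \ {src})
    (w w' : Sym2 α → ℝ) (hw : ∀ e ∈ E, 0 ≤ w e) (hw' : ∀ e ∈ E, 0 ≤ w' e)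
    (e₀ : Sym2 α) (he₀E : e₀ ∈ E) (he₀i : i ∈ e₀)
    (hagree : ∀ e, e ≠ e₀ → w' e = w e) (hle : w e₀ ≤ w' e₀)
    (hN : (V \ {src}).Nonempty)
    (hconn : Connectable src E (V \ {src})) :
    shapley (V \ {src}) (connGame src w E) i ≤
      shapley (V \ {src}) (connGame src w' E) i :=
  amcm_cost_monotone_general α V src E i hiV w w' hw hw' e₀ he₀i hagree hle hconn
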